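/- arXiv:2511.10641 — 2 statements merged into one kernel-verified Lean document; each statement's English description precedes it below -/
import Mathlib

section
/- Let B = x_1…x_t be a broken cycle (each consecutive pair is either an 'actual' edge of G' or a 'broken' pair lying in a common part of one of the two partitions) with an odd number of actual edges and containing no kinks. Then there exists a simple broken cycle with an odd number of actual edges whose vertex set is contained in V(B). -/
/-- A broken cycle of length `t` with respect to a graph `G` on `[n]` and two
partitions of `[n]` (given by their part-labelling functions `fR`, `fB`):
a cyclic sequence of vertices (encoded as a `t`-periodic function `x : ℕ → Fin n`)
together with a marking of each step as an actual edge of `G` or a broken edge,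
where a broken edge must lie in a common part of one of the two partitions. -/
structure BrokenCycle (n : ℕ) (G : SimpleGraph (Fin n)) (fR fB : Fin n → ℕ) where
  t : ℕ
  tpos : 0 < t
  x : ℕ → Fin n
  hper : ∀ i, x (i + t) = x i
  actual : ℕ → Bool
  hperA : ∀ i, actual (i + t) = actual i
  hadj : ∀ i, actual i = true → G.Adj (x i) (x (i + 1))
  hbroken : ∀ i, actual i = false →
    fR (x i) = fR (x (i + 1)) ∨ fB (x i) = fB (x (i + 1))

namespace BrokenCycle

variable {n : ℕ} {G : SimpleGraph (Fin n)} {fR fB : Fin n → ℕ}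

/-- The number of actual edges of a broken cycle. -/
def numActual (B : BrokenCycle n G fR fB) : ℕ :=
  ((Finset.range B.t).filter fun i => B.actual i = true).card

/-- The (unordered) pair of red part-labels of the `i`-th step. -/
def labR (B : BrokenCycle n G fR fB) (i : ℕ) : Sym2 ℕ := s(fR (B.x i), fR (B.x (i + 1)))

/-- The (unordered) pair of blue part-labels of the `i`-th step. -/
def labB (B : BrokenCycle n G fR fB) (i : ℕ) : Sym2 ℕ := s(fB (B.x i), fB (B.x (i + 1)))

/-- A broken cycle is simple if its actual edges form a simple graph with respect
to the two partitions: no two distinct actual edges lie in a common `V_i × V_j`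
(`i ≠ j`), nor in a common `W_i × W_j` (`i ≠ j`). -/
def Simple (B : BrokenCycle n G fR fB) : Prop :=
  ∀ i ∈ Finset.range B.t, ∀ j ∈ Finset.range B.t, i ≠ j →
    B.actual i = true → B.actual j = true →
      ¬(B.labR i = B.labR j ∧ ¬(B.labR i).IsDiag) ∧
      ¬(B.labB i = B.labB j ∧ ¬(B.labB i).IsDiag)

/-- A kink: a pair of incident actual edges lying in a common `V_i × V_j`
(`i ≠ j`) or a common `W_i × W_j` (`i ≠ j`). -/
def HasKink (B : BrokenCycle n G fR fB) : Prop :=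
  ∃ i ∈ Finset.range B.t, ∃ j ∈ Finset.range B.t, i ≠ j ∧
    B.actual i = true ∧ B.actual j = true ∧
    ({B.x i, B.x (i + 1)} ∩ {B.x j, B.x (j + 1)} : Set (Fin n)).Nonempty ∧
    ((B.labR i = B.labR j ∧ ¬(B.labR i).IsDiag) ∨
      (B.labB i = B.labB j ∧ ¬(B.labB i).IsDiag))

end BrokenCycle


/-!
Among closed broken walks on the vertices of `B` with an odd number of actual edges, take one
with the fewest actual edges, and suppose two of its actual edges, traversed as `a → b` and
`c → d`, lie in a common `V_i × V_j` or a common `W_i × W_j`. If `a, c` and `b, d` lie in common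
parts, replacing the two edges by the broken pairs `a ⇢ c` and `b ⇢ d` and traversing the section
from `b` to `c` backwards gives a closed broken walk with two actual edges fewer. Otherwise `a, d`
and `b, c` lie in common parts, and the broken pairs `c ⇢ b` and `a ⇢ d` cut the walk into two
closed broken walks whose actual edges number two fewer in total, so one of them is odd. Either
way minimality is contradicted.
-/

theorem List.exists_eq_append_cons_append_cons_of_not_pairwise {α : Type*} {R : α → α → Prop}
    {l : List α} (h : ¬l.Pairwise R) : ∃ T a M b N, l = T ++ a :: M ++ b :: N ∧ ¬R a b := by
  induction l with
  | nil => simp at h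
  | cons x l ih =>
    rw [List.pairwise_cons] at h
    by_cases hx : ∀ y ∈ l, R x y
    · obtain ⟨T, a, M, b, N, rfl, hab⟩ := ih fun hl => h ⟨hx, hl⟩
      exact ⟨x :: T, a, M, b, N, rfl, hab⟩
    · push Not at hx
      obtain ⟨y, hy, hxy⟩ := hx
      obtain ⟨M, N, rfl⟩ := List.append_of_mem hy
      exact ⟨[], x, M, y, N, rfl, hxy⟩

namespace BrokenWalk

variable {V α β : Type*}

structure Step (V : Type*) where
  src : V
  tgt : V
  actual : Bool

namespace Step

def reverse (s : Step V) : Step V := ⟨s.tgt, s.src, s.actual⟩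

def label (f : V → α) (s : Step V) : Sym2 α := s(f s.src, f s.tgt)

end Step

def SamePart (fR : V → α) (fB : V → β) (u v : V) : Prop := fR u = fR v ∨ fB u = fB v

theorem SamePart.symm {fR : V → α} {fB : V → β} {u v : V} (h : SamePart fR fB u v) :
    SamePart fR fB v u :=
  h.imp Eq.symm Eq.symm

def Step.IsValid (G : SimpleGraph V) (fR : V → α) (fB : V → β) (s : Step V) : Prop :=
  if s.actual then G.Adj s.src s.tgt else SamePart fR fB s.src s.tgt

theorem Step.IsValid.reverse {G : SimpleGraph V} {fR : V → α} {fB : V → β} {s : Step V}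
    (h : s.IsValid G fR fB) : s.reverse.IsValid G fR fB := by
  unfold Step.IsValid Step.reverse at *
  split_ifs at * <;> exact h.symm

def Clash (fR : V → α) (fB : V → β) (s t : Step V) : Prop :=
  s.actual ∧ t.actual ∧
    ((s.label fR = t.label fR ∧ ¬(s.label fR).IsDiag) ∨
      (s.label fB = t.label fB ∧ ¬(s.label fB).IsDiag))

theorem Clash.symm {fR : V → α} {fB : V → β} {s t : Step V} (h : Clash fR fB s t) :
    Clash fR fB t s := by
  obtain ⟨hs, ht, h | h⟩ := h
  · exact ⟨ht, hs, Or.inl ⟨h.1.symm, h.1 ▸ h.2⟩⟩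
  · exact ⟨ht, hs, Or.inr ⟨h.1.symm, h.1 ▸ h.2⟩⟩

theorem Clash.samePart {fR : V → α} {fB : V → β} {s t : Step V} (h : Clash fR fB s t) :
    SamePart fR fB s.src t.src ∧ SamePart fR fB s.tgt t.tgt ∨
      SamePart fR fB s.src t.tgt ∧ SamePart fR fB s.tgt t.src := by
  obtain ⟨-, -, ⟨h, -⟩ | ⟨h, -⟩⟩ := h <;>
    simp only [Step.label, Sym2.eq_iff] at h <;> unfold SamePart <;> tauto

def numActual (l : List (Step V)) : ℕ := l.countP Step.actual

@[simp] theorem numActual_nil : numActual ([] : List (Step V)) = 0 := rfl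

@[simp] theorem numActual_cons (s : Step V) (l : List (Step V)) :
    numActual (s :: l) = numActual l + if s.actual then 1 else 0 :=
  List.countP_cons

@[simp] theorem numActual_append (l₁ l₂ : List (Step V)) :
    numActual (l₁ ++ l₂) = numActual l₁ + numActual l₂ :=
  List.countP_append

@[simp] theorem numActual_map_reverse_reverse (l : List (Step V)) :
    numActual (l.map Step.reverse).reverse = numActual l := by
  simp only [numActual, List.countP_reverse, List.countP_map]
  rfl

def EndpointsIn (S : Set V) (l : List (Step V)) : Prop := ∀ s ∈ l, s.src ∈ S ∧ s.tgt ∈ S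

section Walk

variable (G : SimpleGraph V) (fR : V → α) (fB : V → β)

def IsWalk : V → List (Step V) → V → Prop
  | u, [], v => u = v
  | u, s :: l, v => s.src = u ∧ s.IsValid G fR fB ∧ IsWalk s.tgt l v

variable {G fR fB} {u v w : V} {s : Step V} {l l₁ l₂ : List (Step V)}

@[simp] theorem isWalk_nil : IsWalk G fR fB u [] v ↔ u = v := Iff.rfl

@[simp] theorem isWalk_cons :
    IsWalk G fR fB u (s :: l) v ↔ s.src = u ∧ s.IsValid G fR fB ∧ IsWalk G fR fB s.tgt l v :=
  Iff.rfl

@[simp] theorem isWalk_append :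
    IsWalk G fR fB u (l₁ ++ l₂) w ↔ ∃ v, IsWalk G fR fB u l₁ v ∧ IsWalk G fR fB v l₂ w := by
  induction l₁ generalizing u with
  | nil => simp
  | cons s l₁ ih => simp [ih, and_assoc]

theorem IsWalk.reverse (h : IsWalk G fR fB u l v) :
    IsWalk G fR fB v (l.map Step.reverse).reverse u := by
  induction l generalizing u with
  | nil => exact h.symm
  | cons s l ih =>
    obtain ⟨rfl, hs, hl⟩ := h
    rw [List.map_cons, List.reverse_cons]
    exact isWalk_append.2 ⟨s.tgt, ih hl, isWalk_cons.2 ⟨rfl, hs.reverse, isWalk_nil.2 rfl⟩⟩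

theorem IsWalk.isValid_of_mem (h : IsWalk G fR fB u l v) (hs : s ∈ l) : s.IsValid G fR fB := by
  induction l generalizing u with
  | nil => simp at hs
  | cons t l ih =>
    obtain rfl | hs := List.mem_cons.1 hs
    · exact h.2.1
    · exact ih h.2.2 hs

theorem IsWalk.map_src_append (h : IsWalk G fR fB u l v) :
    l.map Step.src ++ [v] = u :: l.map Step.tgt := by
  induction l generalizing u with
  | nil => simp [h.symm]
  | cons s l ih => simp [h.1, ih h.2.2]

theorem IsWalk.src_getElem_zero (h : IsWalk G fR fB u l v) (hpos : 0 < l.length) :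
    l[0].src = u := by
  cases l with
  | nil => simp at hpos
  | cons s l => exact h.1

theorem IsWalk.tgt_getElem (h : IsWalk G fR fB u l u) {i : ℕ} (hi : i < l.length) :
    l[i].tgt = (l[(i + 1) % l.length]'(Nat.mod_lt _ (by omega))).src := by
  have key : (l.map Step.src ++ [u])[i + 1]? = some l[i].tgt := by
    rw [h.map_src_append, List.getElem?_cons_succ, List.getElem?_map, List.getElem?_eq_getElem hi]
    rfl
  by_cases hlt : i + 1 < l.length
  · simp only [Nat.mod_eq_of_lt hlt]
    simpa [List.getElem?_append_left, hlt] using key.symm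
  · have hlast : i + 1 = l.length := by omega
    simp only [hlast, Nat.mod_self, h.src_getElem_zero (by omega)]
    simpa [List.getElem?_append_right, hlast] using key.symm

theorem IsWalk.tgt_getElem_mod (h : IsWalk G fR fB u l u) (hpos : 0 < l.length) (i : ℕ) :
    (l[i % l.length]'(Nat.mod_lt _ hpos)).tgt = (l[(i + 1) % l.length]'(Nat.mod_lt _ hpos)).src := by
  rw [h.tgt_getElem (Nat.mod_lt _ hpos)]
  simp only [Nat.mod_add_mod]

theorem IsWalk.of_append_cons_append_cons {T M N : List (Step V)} {d e : Step V}
    (h : IsWalk G fR fB u (T ++ d :: M ++ e :: N) v) :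
    IsWalk G fR fB u T d.src ∧ IsWalk G fR fB d.tgt M e.src ∧ IsWalk G fR fB e.tgt N v := by
  obtain ⟨_, hTdM, he, -, hN⟩ := isWalk_append.1 h
  obtain ⟨_, hT, hd, -, hM⟩ := isWalk_append.1 hTdM
  subst hd he
  exact ⟨hT, hM, hN⟩

end Walk

section Reduction

variable {G : SimpleGraph V} {fR : V → α} {fB : V → β} {S : Set V} {u : V} {d e : Step V}
  {T M N : List (Step V)}

theorem numActual_append_cons_append_cons (hd : d.actual) (he : e.actual) :
    numActual (T ++ d :: M ++ e :: N) = numActual T + numActual M + numActual N + 2 := by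
  simp [hd, he]
  omega

theorem exists_smaller_odd_of_crossing (hl : IsWalk G fR fB u (T ++ d :: M ++ e :: N) u)
    (hS : EndpointsIn S (T ++ d :: M ++ e :: N)) (hodd : Odd (numActual (T ++ d :: M ++ e :: N)))
    (hd : d.actual) (he : e.actual)
    (h₁ : SamePart fR fB d.src e.tgt) (h₂ : SamePart fR fB d.tgt e.src) :
    ∃ w l, IsWalk G fR fB w l w ∧ EndpointsIn S l ∧ Odd (numActual l) ∧
      numActual l < numActual (T ++ d :: M ++ e :: N) := by
  obtain ⟨hT, hM, hN⟩ := hl.of_append_cons_append_cons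
  simp only [EndpointsIn, List.forall_mem_append, List.forall_mem_cons] at hS
  obtain ⟨⟨hST, hSd, hSM⟩, hSe, hSN⟩ := hS
  rw [numActual_append_cons_append_cons hd he] at hodd ⊢
  rcases Nat.even_or_odd (numActual M) with hM_even | hM_odd
  · refine ⟨u, T ++ ⟨d.src, e.tgt, false⟩ :: N, ?_, ?_, ?_, ?_⟩
    · exact isWalk_append.2 ⟨d.src, hT, rfl, by simpa [Step.IsValid] using h₁, hN⟩
    · simp only [EndpointsIn, List.forall_mem_append, List.forall_mem_cons]
      exact ⟨hST, ⟨hSd.1, hSe.2⟩, hSN⟩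
    · have : numActual (T ++ ⟨d.src, e.tgt, false⟩ :: N) = numActual T + numActual N := by
        simp
      rw [this, Nat.odd_iff]
      rw [Nat.odd_iff] at hodd
      rw [Nat.even_iff] at hM_even
      omega
    · simp
      omega
  · refine ⟨d.tgt, M ++ [⟨e.src, d.tgt, false⟩], ?_, ?_, ?_, ?_⟩
    · exact isWalk_append.2 ⟨e.src, hM, rfl, by simpa [Step.IsValid] using h₂.symm, rfl⟩
    · simp only [EndpointsIn, List.forall_mem_append, List.forall_mem_cons]
      exact ⟨hSM, ⟨hSe.1, hSd.2⟩, fun _ h => (List.not_mem_nil h).elim⟩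
    · simpa using hM_odd
    · simp
      omega

theorem exists_smaller_odd_of_parallel (hl : IsWalk G fR fB u (T ++ d :: M ++ e :: N) u)
    (hS : EndpointsIn S (T ++ d :: M ++ e :: N)) (hodd : Odd (numActual (T ++ d :: M ++ e :: N)))
    (hd : d.actual) (he : e.actual)
    (h₁ : SamePart fR fB d.src e.src) (h₂ : SamePart fR fB d.tgt e.tgt) :
    ∃ w l, IsWalk G fR fB w l w ∧ EndpointsIn S l ∧ Odd (numActual l) ∧
      numActual l < numActual (T ++ d :: M ++ e :: N) := by
  obtain ⟨hT, hM, hN⟩ := hl.of_append_cons_append_cons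
  simp only [EndpointsIn, List.forall_mem_append, List.forall_mem_cons] at hS
  obtain ⟨⟨hST, hSd, hSM⟩, hSe, hSN⟩ := hS
  have hcount : numActual (T ++ ⟨d.src, e.src, false⟩ :: ((M.map Step.reverse).reverse ++
      ⟨d.tgt, e.tgt, false⟩ :: N)) = numActual T + numActual M + numActual N := by
    simp [add_assoc]
  rw [numActual_append_cons_append_cons hd he] at hodd ⊢
  refine ⟨u, T ++ ⟨d.src, e.src, false⟩ :: ((M.map Step.reverse).reverse ++
      ⟨d.tgt, e.tgt, false⟩ :: N), ?_, ?_, ?_, ?_⟩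
  · refine isWalk_append.2 ⟨d.src, hT, rfl, by simpa [Step.IsValid] using h₁, ?_⟩
    exact isWalk_append.2 ⟨d.tgt, hM.reverse, rfl, by simpa [Step.IsValid] using h₂, hN⟩
  · simp only [EndpointsIn, List.forall_mem_append, List.forall_mem_cons, List.mem_reverse,
      List.mem_map, forall_exists_index, and_imp, forall_apply_eq_imp_iff₂]
    exact ⟨hST, ⟨hSd.1, hSe.1⟩, fun m hm => (hSM m hm).symm, ⟨hSd.2, hSe.2⟩, hSN⟩
  · rw [hcount, Nat.odd_iff]
    rw [Nat.odd_iff] at hodd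
    omega
  · omega

theorem exists_smaller_odd_of_clash (hl : IsWalk G fR fB u (T ++ d :: M ++ e :: N) u)
    (hS : EndpointsIn S (T ++ d :: M ++ e :: N)) (hodd : Odd (numActual (T ++ d :: M ++ e :: N)))
    (hde : Clash fR fB d e) :
    ∃ w l, IsWalk G fR fB w l w ∧ EndpointsIn S l ∧ Odd (numActual l) ∧
      numActual l < numActual (T ++ d :: M ++ e :: N) := by
  rcases hde.samePart with ⟨h₁, h₂⟩ | ⟨h₁, h₂⟩
  · exact exists_smaller_odd_of_parallel hl hS hodd hde.1 hde.2.1 h₁ h₂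
  · exact exists_smaller_odd_of_crossing hl hS hodd hde.1 hde.2.1 h₁ h₂

theorem exists_odd_pairwise_not_clash {l : List (Step V)} (hl : IsWalk G fR fB u l u)
    (hS : EndpointsIn S l) (hodd : Odd (numActual l)) :
    ∃ w l', IsWalk G fR fB w l' w ∧ EndpointsIn S l' ∧ Odd (numActual l') ∧
      l'.Pairwise (fun s t => ¬Clash fR fB s t) := by
  induction hk : numActual l using Nat.strong_induction_on generalizing u l with
  | _ k ih =>
    by_cases hp : l.Pairwise (fun s t => ¬Clash fR fB s t)
    · exact ⟨u, l, hl, hS, hodd, hp⟩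
    obtain ⟨T, d, M, e, N, rfl, hde⟩ := List.exists_eq_append_cons_append_cons_of_not_pairwise hp
    obtain ⟨w, l', hl', hS', hodd', hlt⟩ := exists_smaller_odd_of_clash hl hS hodd (not_not.1 hde)
    exact ih _ (hk ▸ hlt) hl' hS' hodd' rfl

end Reduction

end BrokenWalk

namespace BrokenCycle

open BrokenWalk

variable {n : ℕ} {G : SimpleGraph (Fin n)} {fR fB : Fin n → ℕ}

def step (B : BrokenCycle n G fR fB) (i : ℕ) : Step (Fin n) := ⟨B.x i, B.x (i + 1), B.actual i⟩

def toSteps (B : BrokenCycle n G fR fB) : List (Step (Fin n)) := (List.range B.t).map B.step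

theorem isValid_step (B : BrokenCycle n G fR fB) (i : ℕ) : (B.step i).IsValid G fR fB := by
  unfold Step.IsValid step
  cases h : B.actual i
  · simpa [SamePart] using B.hbroken i h
  · simpa using B.hadj i h

theorem isWalk_map_range' (B : BrokenCycle n G fR fB) (a k : ℕ) :
    IsWalk G fR fB (B.x a) ((List.range' a k).map B.step) (B.x (a + k)) := by
  induction k generalizing a with
  | zero => rfl
  | succ k ih =>
    rw [show a + (k + 1) = a + 1 + k by omega]
    exact ⟨rfl, B.isValid_step a, ih (a + 1)⟩

theorem isWalk_toSteps (B : BrokenCycle n G fR fB) :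
    IsWalk G fR fB (B.x 0) B.toSteps (B.x 0) := by
  have h := B.isWalk_map_range' 0 B.t
  rwa [B.hper 0, ← List.range_eq_range'] at h

theorem endpointsIn_toSteps (B : BrokenCycle n G fR fB) :
    EndpointsIn (Set.range B.x) B.toSteps := by
  simp [EndpointsIn, toSteps, step]

theorem numActual_toSteps (B : BrokenCycle n G fR fB) :
    BrokenWalk.numActual B.toSteps = B.numActual := by
  rw [BrokenWalk.numActual, toSteps, List.countP_map, List.countP_eq_length_filter]
  simp only [BrokenCycle.numActual, Finset.card_def, Finset.filter_val, Finset.range_val,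
    Multiset.range, Multiset.filter_coe, Multiset.coe_card]
  simp [step, Function.comp_def]

theorem simple_of_pairwise (B : BrokenCycle n G fR fB)
    (h : B.toSteps.Pairwise fun s t => ¬Clash fR fB s t) : B.Simple := by
  have hlt : ∀ i < B.t, ∀ j < B.t, i < j → ¬Clash fR fB (B.step i) (B.step j) := by
    intro i hi j hj hij
    simpa [toSteps] using
      List.pairwise_iff_getElem.1 h i j (by simpa [toSteps]) (by simpa [toSteps]) hij
  intro i hi j hj hij hai haj
  rw [Finset.mem_range] at hi hj
  have hij' : ¬Clash fR fB (B.step i) (B.step j) := by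
    rcases lt_or_gt_of_ne hij with h | h
    · exact hlt i hi j hj h
    · exact fun hc => hlt j hj i hi h hc.symm
  exact ⟨fun hR => hij' ⟨hai, haj, Or.inl hR⟩, fun hB => hij' ⟨hai, haj, Or.inr hB⟩⟩

def ofClosedWalk {u : Fin n} {l : List (Step (Fin n))} (hl : IsWalk G fR fB u l u)
    (hpos : 0 < l.length) : BrokenCycle n G fR fB where
  t := l.length
  tpos := hpos
  x i := (l[i % l.length]'(Nat.mod_lt _ hpos)).src
  hper i := by simp
  actual i := (l[i % l.length]'(Nat.mod_lt _ hpos)).actual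
  hperA i := by simp
  hadj i h := by
    have hv := hl.isValid_of_mem (List.getElem_mem (Nat.mod_lt i hpos))
    rwa [Step.IsValid, if_pos h, hl.tgt_getElem_mod hpos] at hv
  hbroken i h := by
    have hv := hl.isValid_of_mem (List.getElem_mem (Nat.mod_lt i hpos))
    rwa [Step.IsValid, if_neg (by simp [h]), hl.tgt_getElem_mod hpos] at hv

theorem toSteps_ofClosedWalk {u : Fin n} {l : List (Step (Fin n))} (hl : IsWalk G fR fB u l u)
    (hpos : 0 < l.length) : (ofClosedWalk hl hpos).toSteps = l := by
  refine List.ext_getElem (by simp [toSteps, ofClosedWalk]) fun i _ hi => ?_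
  simp only [toSteps, List.getElem_map, List.getElem_range, step, ofClosedWalk]
  rw [← hl.tgt_getElem_mod hpos]
  simp only [Nat.mod_eq_of_lt hi]

end BrokenCycle

theorem stmt_4_general (n : ℕ) (G : SimpleGraph (Fin n)) (fR fB : Fin n → ℕ)
    (B : BrokenCycle n G fR fB) (hodd : Odd B.numActual) :
    ∃ B' : BrokenCycle n G fR fB, B'.Simple ∧ Odd B'.numActual ∧
      Set.range B'.x ⊆ Set.range B.x := by
  obtain ⟨u, l, hl, hS, hodd', hsimple⟩ := BrokenWalk.exists_odd_pairwise_not_clash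
    B.isWalk_toSteps B.endpointsIn_toSteps (B.numActual_toSteps.symm ▸ hodd)
  have hpos : 0 < l.length := hodd'.pos.trans_le List.countP_le_length
  refine ⟨.ofClosedWalk hl hpos, BrokenCycle.simple_of_pairwise _ ?_, ?_, ?_⟩
  · rwa [BrokenCycle.toSteps_ofClosedWalk]
  · rwa [← BrokenCycle.numActual_toSteps, BrokenCycle.toSteps_ofClosedWalk]
  · rintro _ ⟨i, rfl⟩
    exact (hS _ (List.getElem_mem _)).1

/-- if `B` is a broken cycle with an odd number of actual edges and
no kinks, then there is a simple broken cycle with an odd number of actual edges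
whose vertex set is contained in that of `B`. -/
theorem stmt_4 (n : ℕ) (G : SimpleGraph (Fin n)) (fR fB : Fin n → ℕ)
    (B : BrokenCycle n G fR fB) (hodd : Odd B.numActual) (hnk : ¬ B.HasKink) :
    ∃ B' : BrokenCycle n G fR fB, B'.Simple ∧ Odd B'.numActual ∧
      Set.range B'.x ⊆ Set.range B.x :=
  stmt_4_general n G fR fB B hodd
end

section
/- If v is the Perron eigenvector (unit, nonnegative) of a symmetric nonnegative matrix A with eigenvalue μ, and for each x the x-th coordinate satisfies μ v_x = Σ_{y: A_{xy}>0} A_{xy} v_y, then: if v_x ≥ (1-γ)·v_max and every positive entry A_{xy} equals 1 with the degree d(x) := #{y : A_{xy}=1} satisfying |d(x) - μ| ≤ γ·μ/10, then #{y ~ x : v_y ≥ (1-√γ)v_max} ≥ (1 - 2√γ)·d(x), for 0 < γ ≤ 1/4. -/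
/-- if `v` is a unit nonnegative (Perron) eigenvector of a 0/1
symmetric matrix `A` with eigenvalue `μ > 0`, `v x ≥ (1-γ) v_max`, and the
degree `d(x)` satisfies `|d(x) - μ| ≤ γμ/10`, then at least `(1-2√γ) d(x)`
neighbours `y` of `x` have `v y ≥ (1-√γ) v_max`, for `0 < γ ≤ 1/4`. -/
theorem stmt_16 (n : ℕ) (A : Matrix (Fin n) (Fin n) ℝ) (hA : A.IsSymm)
    (h01 : ∀ i j, A i j = 0 ∨ A i j = 1) (v : Fin n → ℝ) (hnn : ∀ i, 0 ≤ v i)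
    (hunit : ∑ i, (v i) ^ 2 = 1) (μ vmax γ : ℝ) (hμ : 0 < μ)
    (heig : A.mulVec v = μ • v) (hvmax : ∀ i, v i ≤ vmax) (hach : ∃ i, v i = vmax)
    (hγ0 : 0 < γ) (hγ1 : γ ≤ 1 / 4) (x : Fin n)
    (hx : (1 - γ) * vmax ≤ v x)
    (hd : |(Nat.card {y : Fin n // A x y = 1} : ℝ) - μ| ≤ γ * μ / 10) :
    (1 - 2 * Real.sqrt γ) * (Nat.card {y : Fin n // A x y = 1} : ℝ)
      ≤ (Nat.card {y : Fin n // A x y = 1 ∧ (1 - Real.sqrt γ) * vmax ≤ v y} : ℝ) := by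
  classical
  set s := Real.sqrt γ with hs
  have hs0 : 0 < s := Real.sqrt_pos.2 hγ0
  have hs2 : s ^ 2 = γ := Real.sq_sqrt hγ0.le
  have hs12 : s ≤ 1 / 2 := by
    rw [hs, show (1:ℝ)/2 = Real.sqrt ((1:ℝ)/4) by
      rw [show (1:ℝ)/4 = ((1:ℝ)/2)^2 by norm_num, Real.sqrt_sq (by norm_num)]]
    exact Real.sqrt_le_sqrt hγ1
  obtain ⟨i, hi⟩ : ∃ i, v i ≠ 0 := by
    by_contra h
    push_neg at h
    simp [h] at hunit
  have hvmax0 : 0 < vmax :=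
    lt_of_lt_of_le ((hnn i).lt_of_ne (Ne.symm hi)) (hvmax i)
  set S := Finset.univ.filter (fun y => A x y = 1) with hS
  set B := Finset.univ.filter (fun y => A x y = 1 ∧ (1 - s) * vmax ≤ v y) with hB
  have hBS : B ⊆ S := by
    intro y hy
    simp only [hS, hB, Finset.mem_filter, Finset.mem_univ, true_and] at *
    exact hy.1
  have hcardS : (Nat.card {y : Fin n // A x y = 1} : ℝ) = (S.card : ℝ) := by
    rw [Nat.card_eq_fintype_card, Fintype.card_subtype]
  have hcardB : (Nat.card {y : Fin n // A x y = 1 ∧ (1 - s) * vmax ≤ v y} : ℝ)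
      = (B.card : ℝ) := by
    rw [Nat.card_eq_fintype_card, Fintype.card_subtype]
  have heq : μ * v x = ∑ y ∈ S, v y := by
    have h1 := congrFun heig x
    simp only [Matrix.mulVec, dotProduct, Pi.smul_apply, smul_eq_mul] at h1
    rw [← h1]
    rw [show (∑ y, A x y * v y) = ∑ y ∈ S, A x y * v y from
      (Finset.sum_filter_of_ne (fun y _ hne => by
        rcases h01 x y with h | h
        · exact absurd (by rw [h, zero_mul]) hne
        · exact h)).symm]
    refine Finset.sum_congr rfl (fun y hy => ?_)
    rw [(Finset.mem_filter.mp hy).2, one_mul]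
  have hsum : ∑ y ∈ S, v y ≤ B.card * vmax + ((S.card : ℝ) - B.card) * ((1 - s) * vmax) := by
    rw [← Finset.sum_sdiff hBS]
    have h1 : ∑ y ∈ B, v y ≤ B.card * vmax := by
      calc ∑ y ∈ B, v y ≤ ∑ y ∈ B, vmax := Finset.sum_le_sum (fun y _ => hvmax y)
        _ = B.card * vmax := by rw [Finset.sum_const, nsmul_eq_mul]
    have h2 : ∑ y ∈ S \ B, v y ≤ ((S.card : ℝ) - B.card) * ((1 - s) * vmax) := by
      calc ∑ y ∈ S \ B, v y ≤ ∑ y ∈ S \ B, (1 - s) * vmax := by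
            refine Finset.sum_le_sum (fun y hy => ?_)
            obtain ⟨hyS, hyB⟩ := Finset.mem_sdiff.mp hy
            have hy1 : A x y = 1 := (Finset.mem_filter.mp hyS).2
            have : ¬ ((1 - s) * vmax ≤ v y) := by
              intro hle
              exact hyB (Finset.mem_filter.mpr ⟨Finset.mem_univ y, hy1, hle⟩)
            linarith
        _ = ((S \ B).card : ℝ) * ((1 - s) * vmax) := by
            rw [Finset.sum_const, nsmul_eq_mul]
        _ = ((S.card : ℝ) - B.card) * ((1 - s) * vmax) := by
            rw [Finset.card_sdiff_of_subset hBS, Nat.cast_sub (Finset.card_le_card hBS)]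
    linarith
  rw [hcardS, hcardB]
  rw [hcardS] at hd
  rw [abs_le] at hd
  have hBle : (B.card : ℝ) ≤ S.card := Nat.cast_le.mpr (Finset.card_le_card hBS)
  have hB0 : (0:ℝ) ≤ B.card := Nat.cast_nonneg _
  have hkey : μ * ((1 - γ) * vmax) ≤ μ * v x := by
    exact mul_le_mul_of_nonneg_left hx hμ.le
  -- μ(1-γ)vmax ≤ B vmax + (d - B)(1-s) vmax
  have hmain : μ * (1 - γ) ≤ (B.card : ℝ) + ((S.card : ℝ) - B.card) * (1 - s) := by
    have h3 : μ * ((1 - γ) * vmax) ≤ B.card * vmax + ((S.card : ℝ) - B.card) * ((1 - s) * vmax) := by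
      calc μ * ((1 - γ) * vmax) ≤ μ * v x := hkey
        _ = ∑ y ∈ S, v y := heq
        _ ≤ _ := hsum
    nlinarith [hvmax0]
  nlinarith [hd.1, hd.2, mul_pos hμ hγ0, hs0, hs2, hBle, hB0,
    mul_nonneg hs0.le (sub_nonneg.mpr hBle)]
end
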